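/- The polynomial I_n admits the holomorphic-component expansion I_n(z,w|ξ) = n! · ∑_{k=0}^{n} (ν^k/k!) · (i^{n−k} α^{(n−k)/2} / (n−k)!) · H_{n−k}( i·α^{1/2}·z + i·ξ/(2α^{1/2}) ) · w^k, where H_m is the physicists' Hermite polynomial and α^{1/2} is a fixed complex square root of α ≠ 0. -/

import Mathlib

open Complex

noncomputable def Ic (ν α ξ z w : ℂ) : ℕ → ℂ
  | 0 => 1
  | 1 => ν * w - 2 * α * z - ξ
  | (n + 2) => (ν * w - 2 * α * z - ξ) * Ic ν α ξ z w (n + 1)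
      + 2 * α * (n + 1) * Ic ν α ξ z w n

noncomputable def Hc : ℕ → ℂ → ℂ
  | 0, _ => 1
  | 1, x => 2 * x
  | (n + 2), x => 2 * x * Hc (n + 1) x - 2 * (n + 1) * Hc n x

/-! The sequences `hermiteSeq a c` (`u₀ = 1`, `u₁ = a`, `u_{n+2} = a u_{n+1} + c (n+1) u_n`)
have exponential generating function `exp (a t + c t² / 2)`, characterised by the differential
equation `f' = (a + c t) f`. Hence these generating functions multiply by adding parameters, and
the coefficient of `tⁿ` in the product is a binomial convolution. Now `Ic` is `hermiteSeq` with
`a = ν w + 2 (i s) x`, `c = 2α`, where `x = i s z + i ξ / (2 s)`; the factor with parameters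
`(ν w, 0)` gives the powers `(ν w)ᵏ`, and the one with parameters `(2 (i s) x, -2 (i s)²)` gives the
rescaled Hermite values `(i s)ᵐ H_m(x)`. -/

open PowerSeries Finset
open scoped Nat

namespace PowerSeries

theorem eq_of_derivative_eq_mul {R : Type*} [CommRing R] [IsAddTorsionFree R] {f g q : R⟦X⟧}
    (h0 : constantCoeff f = constantCoeff g) (hf : d⁄dX R f = q * f) (hg : d⁄dX R g = q * g) :
    f = g := by
  rw [← sub_eq_zero]
  set h := f - g
  have hd : d⁄dX R h = q * h := by simp only [h, map_sub, hf, hg, mul_sub]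
  have hvanish : ∀ n, ∀ m ≤ n, coeff m h = 0 := by
    intro n
    induction n with
    | zero =>
      intro m hm
      rw [Nat.le_zero.mp hm, coeff_zero_eq_constantCoeff_apply, map_sub, h0, sub_self]
    | succ n ih =>
      intro m hm
      rcases Nat.lt_or_eq_of_le hm with hlt | rfl
      · exact ih m (Nat.le_of_lt_succ hlt)
      have hcoeff := congrArg (coeff n) hd
      rw [coeff_derivative, coeff_mul, sum_eq_zero fun p hp => by
        rw [ih p.2 (HasAntidiagonal.antidiagonal.snd_le hp), mul_zero]] at hcoeff
      have hnsmul : (n + 1) • coeff (n + 1) h = 0 := by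
        rw [nsmul_eq_mul, mul_comm]; exact_mod_cast hcoeff
      exact (nsmul_eq_zero_iff_right n.succ_ne_zero).mp hnsmul
  ext n
  simpa using hvanish n n le_rfl

end PowerSeries

section HermiteSeq

variable {R : Type*} [CommRing R]

noncomputable def hermiteSeq (a c : R) : ℕ → R
  | 0 => 1
  | 1 => a
  | n + 2 => a * hermiteSeq a c (n + 1) + c * (n + 1) * hermiteSeq a c n

theorem hermiteSeq_zero_eq_pow (a : R) : ∀ n, hermiteSeq a 0 n = a ^ n
  | 0 => (pow_zero a).symm
  | 1 => (pow_one a).symm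
  | n + 2 => by rw [hermiteSeq, hermiteSeq_zero_eq_pow a (n + 1)]; ring

variable {K : Type*} [Field K] [CharZero K]

noncomputable def hermiteEGF (a c : K) : K⟦X⟧ :=
  mk fun n => hermiteSeq a c n / n !

theorem derivative_hermiteEGF (a c : K) :
    d⁄dX K (hermiteEGF a c) = (C a + C c * X) * hermiteEGF a c := by
  ext n
  rw [coeff_derivative, add_mul, map_add, coeff_C_mul, mul_assoc, coeff_C_mul]
  rcases n with _ | n
  · simp [hermiteEGF, hermiteSeq]
  · rw [coeff_succ_X_mul]
    have hn2 : (n : K) + 1 + 1 ≠ 0 := by exact_mod_cast (n + 1).succ_ne_zero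
    simp only [hermiteEGF, coeff_mk, hermiteSeq, Nat.factorial_succ]
    push_cast
    field_simp

theorem hermiteEGF_mul (a b c c' : K) :
    hermiteEGF a c * hermiteEGF b c' = hermiteEGF (a + b) (c + c') := by
  refine eq_of_derivative_eq_mul ?_ ?_ (derivative_hermiteEGF (a + b) (c + c'))
  · simp [hermiteEGF, hermiteSeq]
  · rw [Derivation.leibniz, derivative_hermiteEGF, derivative_hermiteEGF, smul_eq_mul,
      smul_eq_mul, map_add, map_add]
    ring

theorem hermiteSeq_add (a b c c' : K) (n : ℕ) :
    hermiteSeq (a + b) (c + c') n =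
      n ! * ∑ k ∈ range (n + 1), hermiteSeq a c k / k ! * (hermiteSeq b c' (n - k) / (n - k)!) := by
  have hcoeff := congrArg (coeff n) (hermiteEGF_mul a b c c')
  rw [coeff_mul, Nat.sum_antidiagonal_eq_sum_range_succ_mk] at hcoeff
  simp only [hermiteEGF, coeff_mk] at hcoeff
  rw [hcoeff, mul_div_cancel₀ _ (Nat.cast_ne_zero.mpr n.factorial_ne_zero)]

end HermiteSeq

theorem Ic_eq_hermiteSeq (ν α ξ z w : ℂ) :
    ∀ n, Ic ν α ξ z w n = hermiteSeq (ν * w - 2 * α * z - ξ) (2 * α) n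
  | 0 => rfl
  | 1 => rfl
  | n + 2 => by
    rw [Ic, hermiteSeq, Ic_eq_hermiteSeq ν α ξ z w n, Ic_eq_hermiteSeq ν α ξ z w (n + 1)]

theorem pow_mul_Hc (r x : ℂ) : ∀ m, r ^ m * Hc m x = hermiteSeq (2 * r * x) (-2 * r ^ 2) m
  | 0 => by rw [Hc, hermiteSeq, pow_zero, mul_one]
  | 1 => by rw [Hc, hermiteSeq, pow_one]; ring
  | n + 2 => by
    rw [Hc, hermiteSeq, ← pow_mul_Hc r x n, ← pow_mul_Hc r x (n + 1)]
    ring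

theorem stmt17 (ν α ξ z w s : ℂ) (hα : α ≠ 0) (hs : s ^ 2 = α) (n : ℕ) :
    Ic ν α ξ z w n =
      (n.factorial : ℂ) *
        ∑ k ∈ Finset.range (n + 1),
          ν ^ k / (k.factorial : ℂ) *
            (Complex.I ^ (n - k) * s ^ (n - k) / ((n - k).factorial : ℂ)) *
            Hc (n - k) (Complex.I * s * z + Complex.I * ξ / (2 * s)) * w ^ k := by
  have hs0 : s ≠ 0 := by
    rintro rfl
    exact hα (by rw [← hs]; ring)
  set x := I * s * z + I * ξ / (2 * s)
  have ha : ν * w - 2 * α * z - ξ = ν * w + 2 * (I * s) * x := by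
    simp only [x, ← hs]
    field_simp
    linear_combination (-2 * s ^ 2 * z - ξ) * I_sq
  have hc : 2 * α = 0 + -2 * (I * s) ^ 2 := by rw [mul_pow, I_sq, hs]; ring
  rw [Ic_eq_hermiteSeq, ha, hc, hermiteSeq_add]
  congr 1
  refine sum_congr rfl fun k _ => ?_
  rw [hermiteSeq_zero_eq_pow, ← pow_mul_Hc, mul_pow, mul_pow]
  ring
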